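/- Let n ≥ 2 and define, for i = 1, …, n and j = 0, …, n−1, the coefficients β_{i0} = 1, β_{ij} = 1 − j/n if 0 < j and i ≤ j, and β_{ij} = −j/n if i > j > 0. Let B be the n×n real matrix with entries B_{i,j+1} = β_{ij}. Then B is invertible, and for every q ∈ ℝ^n, setting x_0 = (1/n)∑_{i=1}^n q_i and x_j = q_j − q_{j+1} for j = 1, …, n−1, one has q = B·x where x = (x_0, x_1, …, x_{n−1}). -/
import Mathlib



private lemma tel_one (m i : ℕ) (him : i ≤ m) (Q : ℕ → ℝ) :
    ∑ k ∈ Finset.range m, (if i ≤ k then (1:ℝ) else 0) * (Q k - Q (k+1))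
      = Q i - Q m := by
  calc ∑ k ∈ Finset.range m, (if i ≤ k then (1:ℝ) else 0) * (Q k - Q (k+1))
      = ∑ k ∈ Finset.range m, ((fun t => Q (max t i)) k - (fun t => Q (max t i)) (k+1)) := by
        refine Finset.sum_congr rfl fun k _ => ?_
        rcases le_or_gt i k with h | h
        · have e1 : (if i ≤ k then (1:ℝ) else 0) = 1 := if_pos h
          have e2 : max k i = k := max_eq_left h
          have e3 : max (k+1) i = k+1 := max_eq_left (by omega)
          simp only []
          rw [e1, e2, e3]; ring
        · have e1 : (if i ≤ k then (1:ℝ) else 0) = 0 := if_neg (by omega)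
          have e2 : max k i = i := max_eq_right h.le
          have e3 : max (k+1) i = i := max_eq_right (by omega)
          simp only []
          rw [e1, e2, e3]; ring
    _ = Q (max 0 i) - Q (max m i) := Finset.sum_range_sub' _ m
    _ = Q i - Q m := by rw [max_eq_right (Nat.zero_le _), max_eq_left him]

private lemma tel_two (m : ℕ) (Q : ℕ → ℝ) :
    ∑ k ∈ Finset.range m, (((k:ℝ)+1)/((m:ℝ)+1)) * (Q k - Q (k+1))
      = -(((m:ℝ)/((m:ℝ)+1)) * Q m) + (1/((m:ℝ)+1)) * ∑ k ∈ Finset.range m, Q k := by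
  have hne : ((m:ℝ)+1) ≠ 0 := by positivity
  calc ∑ k ∈ Finset.range m, (((k:ℝ)+1)/((m:ℝ)+1)) * (Q k - Q (k+1))
      = ∑ k ∈ Finset.range m,
          (((fun (t : ℕ) => ((t:ℝ)/((m:ℝ)+1)) * Q t) k - (fun (t : ℕ) => ((t:ℝ)/((m:ℝ)+1)) * Q t) (k+1))
            + (1/((m:ℝ)+1)) * Q k) := by
        refine Finset.sum_congr rfl fun k _ => ?_
        simp only []
        push_cast
        field_simp
        ring
    _ = (∑ k ∈ Finset.range m, ((fun (t : ℕ) => ((t:ℝ)/((m:ℝ)+1)) * Q t) k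
          - (fun (t : ℕ) => ((t:ℝ)/((m:ℝ)+1)) * Q t) (k+1)))
          + ∑ k ∈ Finset.range m, (1/((m:ℝ)+1)) * Q k := Finset.sum_add_distrib
    _ = (((0:ℝ)/((m:ℝ)+1)) * Q 0 - ((m:ℝ)/((m:ℝ)+1)) * Q m)
          + (1/((m:ℝ)+1)) * ∑ k ∈ Finset.range m, Q k := by
        rw [Finset.sum_range_sub' (fun (t : ℕ) => ((t:ℝ)/((m:ℝ)+1)) * Q t) m, Finset.mul_sum]
        norm_num
    _ = -(((m:ℝ)/((m:ℝ)+1)) * Q m) + (1/((m:ℝ)+1)) * ∑ k ∈ Finset.range m, Q k := by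
        norm_num

private lemma key_sum (m i : ℕ) (him : i ≤ m) (Q : ℕ → ℝ) :
    ∑ k ∈ Finset.range m,
      ((if i < k+1 then 1 - ((k:ℝ)+1)/((m:ℝ)+1) else -(((k:ℝ)+1)/((m:ℝ)+1)))
        * (Q k - Q (k+1)))
      = Q i - (1/((m:ℝ)+1)) * ∑ k ∈ Finset.range (m+1), Q k := by
  have hne : ((m:ℝ)+1) ≠ 0 := by positivity
  have split : ∀ k ∈ Finset.range m,
      (if i < k+1 then 1 - ((k:ℝ)+1)/((m:ℝ)+1) else -(((k:ℝ)+1)/((m:ℝ)+1)))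
        * (Q k - Q (k+1))
      = (if i ≤ k then (1:ℝ) else 0) * (Q k - Q (k+1))
        - (((k:ℝ)+1)/((m:ℝ)+1)) * (Q k - Q (k+1)) := by
    intro k _
    rcases le_or_gt i k with h | h
    · rw [if_pos (by omega), if_pos h]; ring
    · rw [if_neg (by omega), if_neg (by omega)]; ring
  rw [Finset.sum_congr rfl split, Finset.sum_sub_distrib, tel_one m i him Q, tel_two m Q,
    Finset.sum_range_succ]
  field_simp
  ring


/-- the change-of-coordinates matrix `B` built from the coefficients
`β_{ij}` is invertible and sends the vector of coordinates
`x = (x_0, x_1, …, x_{n-1})` (mean and consecutive gaps) to `q`.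
Indices are 0-based: row `i` here corresponds to the paper's row `i+1`, so the
paper's condition `i ≤ j` reads `(i : ℕ) < (j : ℕ)`. -/
theorem stmt12 (n : ℕ) (hn : 2 ≤ n)
    (B : Matrix (Fin n) (Fin n) ℝ)
    (hB : ∀ i j : Fin n, B i j =
      if (j : ℕ) = 0 then 1
      else if (i : ℕ) < (j : ℕ) then 1 - (j : ℝ) / n else -((j : ℝ) / n)) :
    IsUnit B ∧
    ∀ (q x : Fin n → ℝ),
      x ⟨0, by omega⟩ = (1 / n) * ∑ i, q i →
      (∀ j : Fin n, 0 < (j : ℕ) →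
        x j = q ⟨(j : ℕ) - 1, by have := j.isLt; omega⟩ - q j) →
      q = B.mulVec x := by
  have hmain : ∀ (q x : Fin n → ℝ),
      x ⟨0, by omega⟩ = (1 / n) * ∑ i, q i →
      (∀ j : Fin n, 0 < (j : ℕ) →
        x j = q ⟨(j : ℕ) - 1, by have := j.isLt; omega⟩ - q j) →
      q = B.mulVec x := by
    intro q x h0 hx
    obtain ⟨m, rfl⟩ : ∃ m, n = m + 1 := ⟨n - 1, by omega⟩
    funext i
    have him : (i : ℕ) ≤ m := by omega
    have hcast : ((m + 1 : ℕ) : ℝ) = (m : ℝ) + 1 := by push_cast; ring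
    -- extended q over ℕ, constant past m
    set Q : ℕ → ℝ := fun k => q ⟨min k m, by omega⟩ with hQdef
    have hQk : ∀ (k : ℕ) (h : k < m + 1), Q k = q ⟨k, h⟩ := by
      intro k h
      simp only [hQdef]
      congr 1
      simp [min_eq_left (by omega : k ≤ m)]
    have hsumQ : ∑ j, q j = ∑ k ∈ Finset.range (m+1), Q k := by
      rw [← Fin.sum_univ_eq_sum_range Q (m+1)]
      exact Finset.sum_congr rfl fun j _ => by rw [hQk j j.isLt]
    -- the extended summand
    set G : ℕ → ℝ := fun j =>
      (if j = 0 then (1:ℝ) else if (i:ℕ) < j then 1 - (j:ℝ)/((m+1:ℕ):ℝ)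
        else -((j:ℝ)/((m+1:ℕ):ℝ)))
      * (if h : j < m + 1 then x ⟨j, h⟩ else 0) with hGdef
    have e1 : B.mulVec x i = ∑ j ∈ Finset.range (m+1), G j := by
      rw [← Fin.sum_univ_eq_sum_range G (m+1)]
      rw [Matrix.mulVec, dotProduct]
      refine Finset.sum_congr rfl fun j _ => ?_
      rw [hB]
      simp only [hGdef, dif_pos j.isLt, Fin.eta]
    have e2 : ∑ j ∈ Finset.range (m+1), G j = G 0 + ∑ k ∈ Finset.range m, G (k+1) := by
      rw [Finset.sum_range_succ', add_comm]
    have eG0 : G 0 = x ⟨0, by omega⟩ := by simp [hGdef]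
    have e3 : ∀ k ∈ Finset.range m, G (k+1) =
        (if (i:ℕ) < k+1 then 1 - ((k:ℝ)+1)/((m:ℝ)+1) else -(((k:ℝ)+1)/((m:ℝ)+1)))
          * (Q k - Q (k+1)) := by
      intro k hk
      rw [Finset.mem_range] at hk
      have hkN : k + 1 < m + 1 := by omega
      have hxk : x ⟨k+1, hkN⟩ = Q k - Q (k+1) := by
        rw [hx ⟨k+1, hkN⟩ (by simp), hQk k (by omega), hQk (k+1) hkN]
        congr 1
      simp only [hGdef, dif_pos hkN, if_neg (Nat.succ_ne_zero k), hxk, hcast]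
      push_cast
      ring_nf
    rw [e1, e2, eG0, Finset.sum_congr rfl e3, key_sum m i him Q, h0, hsumQ,
      hQk (i:ℕ) i.isLt, Fin.eta, hcast]
    ring
  refine ⟨?_, hmain⟩
  rw [← Matrix.mulVec_surjective_iff_isUnit]
  intro q
  refine ⟨fun j => if h : (j:ℕ) = 0 then (1 / n) * ∑ i, q i
    else q ⟨(j : ℕ) - 1, by have := j.isLt; omega⟩ - q j, ?_⟩
  exact (hmain q _ (by simp) (fun j hj => by rw [dif_neg (by omega)])).symm
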